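/- (Generalised Strategy Correspondence, part ii) Let G be a MAGIIAN, j ≥ 1, and G^{jK} its j-iterated MKBSC expansion. Let R be an observable reachability objective in G and R^{jK} its j-iterated translation in G^{jK}. Let {α^{jK}_i}_{i∈Agt} be a profile of observation-based memoryless strategies in G^{jK}, and {A_i(α^{jK}_i)}_{i∈Agt} the corresponding profile of generalised induced transducers for G. If {α^{jK}_i}_{i∈Agt} is winning for R^{jK} in G^{jK}, then {A_i(α^{jK}_i)}_{i∈Agt} is winning for R in G (no PDK assumption is needed). -/
import Mathlib


open Set

/-- A multi-agent game with imperfect information against Nature (MAGIIAN).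
`obs i l` is the observation block of agent `i` containing location `l`;
the axioms make the blocks of each agent a partition of the locations. -/
structure MAGIIAN (Agt Loc : Type) (Act : Agt → Type) where
  init : Loc
  trans : Loc → (∀ i, Act i) → Loc → Prop
  obs : Agt → Loc → Set Loc
  obs_mem : ∀ i l, l ∈ obs i l
  obs_eq : ∀ i l l', l' ∈ obs i l → obs i l' = obs i l

namespace MAGIIAN

variable {Agt Loc : Type} {Act : Agt → Type}

/-- `o` is an observation (block) of agent `i` in `G`. -/
def IsObs (G : MAGIIAN Agt Loc Act) (i : Agt) (o : Set Loc) : Prop :=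
  ∃ l, o = G.obs i l

/-- Transition relation `Δ_i` of the projection `G|_i`. -/
def projTrans (G : MAGIIAN Agt Loc Act) (i : Agt) (l : Loc) (a : Act i) (l' : Loc) : Prop :=
  ∃ σ : ∀ j, Act j, σ i = a ∧ G.trans l σ l'

/-- Transition relation `Δ^K_i` of the individual KBSC expansion `(G|_i)^K`. -/
def kTrans (G : MAGIIAN Agt Loc Act) (i : Agt) (s : Set Loc) (a : Act i) (s' : Set Loc) : Prop :=
  ∃ o : Set Loc, G.IsObs i o ∧ s' = {l' ∈ o | ∃ l ∈ s, G.projTrans i l a l'} ∧ s'.Nonempty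

/-- Pruned joint transition relation `Δ^K` of the MKBSC expansion `G^K`
(unrealisable transitions are removed). -/
def kTransJ (G : MAGIIAN Agt Loc Act) (s : Agt → Set Loc) (σ : ∀ i, Act i)
    (s' : Agt → Set Loc) : Prop :=
  (∀ i, G.kTrans i (s i) (σ i) (s' i)) ∧
    ∃ l ∈ (⋂ i, s i), ∃ l' ∈ (⋂ i, s' i), G.trans l σ l'

/-- The MKBSC expansion `G^K`, as a MAGIIAN over joint knowledge states;
agent `i`'s observation of a joint knowledge state is determined by its `i`-th component. -/
def expand (G : MAGIIAN Agt Loc Act) : MAGIIAN Agt (Agt → Set Loc) Act where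
  init := fun _ => {G.init}
  trans := G.kTransJ
  obs := fun i s => {s' | s' i = s i}
  obs_mem := fun _ _ => rfl
  obs_eq := by
    intro i s s' h
    simp only [Set.mem_setOf_eq] at h
    ext t
    simp [Set.mem_setOf_eq, h]

/-- Reachability from the initial location. -/
def Reachable (G : MAGIIAN Agt Loc Act) (l : Loc) : Prop :=
  Relation.ReflTransGen (fun x y => ∃ σ, G.trans x σ y) G.init l

/-- The MKBSC expansion `G^K` fulfills the perfect-distributed-knowledge (PDK) condition:
every reachable joint knowledge state has singleton component intersection. -/
def PDK (G : MAGIIAN Agt Loc Act) : Prop :=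
  ∀ s : Agt → Set Loc, G.expand.Reachable s → ∃ l : Loc, (⋂ i, s i) = {l}

/-- A full play, given as its sequences of locations and of joint actions. -/
def IsPlay (G : MAGIIAN Agt Loc Act) (l : ℕ → Loc) (σ : ℕ → ∀ i, Act i) : Prop :=
  l 0 = G.init ∧ ∀ k, G.trans (l k) (σ k) (l (k + 1))

/-- Observation history of agent `i` (list of observation blocks) up to time `k`. -/
def obsHist (G : MAGIIAN Agt Loc Act) (i : Agt) (l : ℕ → Loc) (k : ℕ) : List (Set Loc) :=
  (List.range (k + 1)).map fun j => G.obs i (l j)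

/-- Outcomes (location sequences) of a profile of observation-based
perfect-recall strategies. -/
def PROutcome (G : MAGIIAN Agt Loc Act) (α : ∀ i, List (Set Loc) → Act i)
    (l : ℕ → Loc) : Prop :=
  ∃ σ : ℕ → ∀ i, Act i, G.IsPlay l σ ∧ ∀ k i, σ k i = α i (G.obsHist i l k)

/-- Outcomes of a profile of observation-based memoryless strategies. -/
def MLOutcome (G : MAGIIAN Agt Loc Act) (α : ∀ i, Set Loc → Act i) (l : ℕ → Loc) : Prop :=
  ∃ σ : ℕ → ∀ i, Act i, G.IsPlay l σ ∧ ∀ k i, σ k i = α i (G.obs i (l k))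

/-- A play is winning for an observable reachability objective `R` iff some
agent at some point observes an observation in `R`. -/
def WinsReach (G : MAGIIAN Agt Loc Act) (R : Set (Set Loc)) (l : ℕ → Loc) : Prop :=
  ∃ i k, G.obs i (l k) ∈ R

/-- A play is winning for an observable safety objective `F` iff at every point
some agent observes an observation in `F`. -/
def WinsSafe (G : MAGIIAN Agt Loc Act) (F : Set (Set Loc)) (l : ℕ → Loc) : Prop :=
  ∀ k, ∃ i, G.obs i (l k) ∈ F

/-- `ob_i`: maps an observation block of `G^K` for agent `i` (all of whose members have the
same `i`-th component `A`) to the unique observation of `i` in `G` that includes `A`. -/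
def obMap (G : MAGIIAN Agt Loc Act) (i : Agt) (O : Set (Agt → Set Loc)) : Set Loc :=
  ⋃ s ∈ O, ⋃ l ∈ s i, G.obs i l

/-- The translated objective `R^K = {s ∈ S : ∃ i, ∃ o ∈ R ∩ Obs_i, s i ⊆ o}`,
as a set of joint knowledge states. -/
def transObj (G : MAGIIAN Agt Loc Act) (R : Set (Set Loc)) : Set (Agt → Set Loc) :=
  {s | ∃ i, ∃ o ∈ R, G.IsObs i o ∧ s i ⊆ o}

end MAGIIAN

namespace MAGIIAN

variable {Agt Loc : Type} {Act : Agt → Type}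

/-- `ExpLoc Agt Loc j` is the type of locations of the `j`-iterated MKBSC
expansion `G^{jK}` (also the type `B^(j)` of the knowledge hierarchy). -/
def ExpLoc (Agt Loc : Type) : ℕ → Type
  | 0 => Loc
  | j + 1 => Agt → Set (ExpLoc Agt Loc j)

/-- The `j`-iterated MKBSC expansion `G^{jK}` (`G^{0K} = G`). -/
def iterExpand (G : MAGIIAN Agt Loc Act) : (j : ℕ) → MAGIIAN Agt (ExpLoc Agt Loc j) Act
  | 0 => G
  | j + 1 => (iterExpand G j).expand

/-- Flattening `ŝ` of a knowledge state `s` of `(G^{jK}|_i)^K` (a set of locations of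
`G^{jK}`) to a set of locations of `G`, obtained by repeatedly taking the (common)
`i`-th component. -/
def hatSet (i : Agt) : (j : ℕ) → Set (ExpLoc Agt Loc j) → Set Loc
  | 0, s => s
  | j + 1, s => hatSet i j (⋃ t ∈ s, t i)

/-- Iterated intersection `⩀s` of a joint knowledge state of `G^{jK}`,
yielding a set of locations of `G`. -/
def capAll : (j : ℕ) → ExpLoc Agt Loc j → Set Loc
  | 0, l => {l}
  | j + 1, s => ⋃ t ∈ (⋂ i, s i), capAll j t

/-- A possible observation profile of `G`. -/
def possibleProfile (G : MAGIIAN Agt Loc Act) (o : Agt → Set Loc) : Prop :=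
  (∀ i, G.IsObs i (o i)) ∧ (⋂ i, o i).Nonempty

/-- Generalised knowledge update: `gdelta G j` is `δ^{j+1}` (so `gdelta G 0 = δ`),
acting on `A^{(j+1)} = Set (ExpLoc Agt Loc j)`; inconsistent tuples are pruned out. -/
def gdelta (G : MAGIIAN Agt Loc Act) :
    (j : ℕ) → (i : Agt) → Set (ExpLoc Agt Loc j) → Act i → Set Loc → Set (ExpLoc Agt Loc j)
  | 0, i, s, a, o => {l' ∈ o | ∃ σ : ∀ j', Act j', σ i = a ∧ ∃ l ∈ s, G.trans l σ l'}
  | j + 1, i, s, a, o =>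
      {t' | (⋂ i', t' i').Nonempty ∧
        ∃ t ∈ s, ∃ σ : ∀ j', Act j', ∃ ob : Agt → Set Loc,
          G.possibleProfile ob ∧ σ i = a ∧ ob i = o ∧
          t' = fun i' => gdelta G j i' (t i') (σ i') (ob i')}

/-- Translation of an observable objective of `H` (a set of observation blocks)
to an observable objective of `H^K`. -/
def trObj {L : Type} (H : MAGIIAN Agt L Act) (R : Set (Set L)) :
    Set (Set (Agt → Set L)) :=
  {O | ∃ (i : Agt) (A : Set L), O = {s | s i = A} ∧ ∃ o ∈ R, H.IsObs i o ∧ A ⊆ o}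

/-- The `j`-iterated translation `R^{jK}` of an observable objective `R` of `G`. -/
def iterObj (G : MAGIIAN Agt Loc Act) (R : Set (Set Loc)) :
    (j : ℕ) → Set (Set (ExpLoc Agt Loc j))
  | 0 => R
  | j + 1 => trObj (iterExpand G j) (iterObj G R j)

/-- Outcomes in `G` of a profile of generalised induced transducers
`{A_i(α_i)}`, for a profile `α` of memoryless strategies on the knowledge states of
`(G^{mK}|_i)^K` (i.e. of observation-based memoryless strategies in `G^{(m+1)K}`):
each agent `i` starts with memory `{init of G^{mK}}`, plays `α i` on its current memory
state, and updates its memory to the unique `Δ^{(m+1)K}_i`-successor that is consistent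
with its new observation. -/
def gTransducerOutcome (G : MAGIIAN Agt Loc Act) (m : ℕ)
    (α : ∀ i, Set (ExpLoc Agt Loc m) → Act i) (l : ℕ → Loc) : Prop :=
  l 0 = G.init ∧ ∃ σ : ℕ → ∀ i, Act i, ∃ mem : (i : Agt) → ℕ → Set (ExpLoc Agt Loc m),
    (∀ i, mem i 0 = {(iterExpand G m).init}) ∧
    (∀ k, G.trans (l k) (σ k) (l (k + 1))) ∧
    (∀ k i, σ k i = α i (mem i k)) ∧
    (∀ k i, (iterExpand G m).kTrans i (mem i k) (σ k i) (mem i (k + 1)) ∧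
      hatSet i m (mem i (k + 1)) ⊆ G.obs i (l (k + 1)))

/-- Outcomes in `G^{(m+1)K}` of a profile of observation-based memoryless strategies
(each agent's action depending only on the `i`-th component of the current joint
knowledge state). -/
def gKMLOutcome (G : MAGIIAN Agt Loc Act) (m : ℕ)
    (α : ∀ i, Set (ExpLoc Agt Loc m) → Act i) (s : ℕ → ExpLoc Agt Loc (m + 1)) : Prop :=
  ∃ σ : ℕ → ∀ i, Act i, s 0 = (iterExpand G (m + 1)).init ∧
    (∀ k, (iterExpand G (m + 1)).trans (s k) (σ k) (s (k + 1))) ∧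
    (∀ k i, σ k i = α i (s k i))

/-- Outcomes in `G` of a profile of `(m+1)`-order knowledge-based strategies based on
`α` and the generalised knowledge update `δ^{m+1} = gdelta G m`. -/
def gKBOutcome (G : MAGIIAN Agt Loc Act) (m : ℕ)
    (α : ∀ i, Set (ExpLoc Agt Loc m) → Act i) (l : ℕ → Loc) : Prop :=
  l 0 = G.init ∧ ∃ σ : ℕ → ∀ i, Act i, ∃ mem : (i : Agt) → ℕ → Set (ExpLoc Agt Loc m),
    (∀ i, mem i 0 = {(iterExpand G m).init}) ∧
    (∀ k, G.trans (l k) (σ k) (l (k + 1))) ∧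
    (∀ k i, σ k i = α i (mem i k)) ∧
    (∀ k i, mem i (k + 1) = gdelta G m i (mem i k) (σ k i) (G.obs i (l (k + 1))) ∧
      (mem i (k + 1)).Nonempty)

end MAGIIAN


namespace MAGIIAN

variable {Agt Loc : Type} {Act : Agt → Type}

lemma expLoc_nonempty (G : MAGIIAN Agt Loc Act) : ∀ m, Nonempty (ExpLoc Agt Loc m)
  | 0 => ⟨G.init⟩
  | m+1 => ⟨fun _ => (∅ : Set (ExpLoc Agt Loc m))⟩

/-- knowledge update within a given observation block -/
def upd (G : MAGIIAN Agt Loc Act) (m : ℕ) (i : Agt) (A : Set (ExpLoc Agt Loc m)) (a : Act i)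
    (o : Set (ExpLoc Agt Loc m)) : Set (ExpLoc Agt Loc m) :=
  {t' ∈ o | ∃ t ∈ A, (G.iterExpand m).projTrans i t a t'}

lemma kTrans_iff (G : MAGIIAN Agt Loc Act) (m : ℕ) (i : Agt) (A : Set (ExpLoc Agt Loc m))
    (a : Act i) (s' : Set (ExpLoc Agt Loc m)) :
    (G.iterExpand m).kTrans i A a s' ↔
      ∃ o, (G.iterExpand m).IsObs i o ∧ s' = G.upd m i A a o ∧ s'.Nonempty := Iff.rfl

/-- "good" locations of the iterated expansion: all components nonempty,
within one observation block, and recursively good -/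
def GoodL (G : MAGIIAN Agt Loc Act) : (m : ℕ) → ExpLoc Agt Loc m → Prop
  | 0, _ => True
  | m+1, t => ∀ i : Agt, (t i).Nonempty ∧
      (∀ y ∈ t i, ∀ z ∈ t i, (G.iterExpand m).obs i y = (G.iterExpand m).obs i z) ∧
      ∀ y ∈ t i, GoodL G m y

lemma goodL_init (G : MAGIIAN Agt Loc Act) : ∀ m, GoodL G m ((G.iterExpand m).init)
  | 0 => trivial
  | m+1 => by
      intro i
      refine ⟨⟨(G.iterExpand m).init, rfl⟩, ?_, ?_⟩
      · rintro y rfl z rfl; rfl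
      · rintro y rfl; exact goodL_init G m

lemma goodL_trans (G : MAGIIAN Agt Loc Act) :
    ∀ m (L : ExpLoc Agt Loc m) (σ : ∀ i, Act i) (L' : ExpLoc Agt Loc m),
      (G.iterExpand m).trans L σ L' → GoodL G m L'
  | 0, _, _, _, _ => trivial
  | m+1, L, σ, L', h => by
      intro i
      obtain ⟨o, ⟨p, hp⟩, hEq, hne⟩ := h.1 i
      refine ⟨hne, ?_, ?_⟩
      · intro y hy z hz
        rw [hEq] at hy hz
        rw [(G.iterExpand m).obs_eq i p y (hp ▸ hy.1), (G.iterExpand m).obs_eq i p z (hp ▸ hz.1)]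
      · intro y hy
        rw [hEq] at hy
        obtain ⟨_, t, _, σ', _, htr⟩ := hy
        exact goodL_trans G m t σ' y htr
lemma hat_mono (i : Agt) : ∀ m (s t : Set (ExpLoc Agt Loc m)), s ⊆ t →
    hatSet i m s ⊆ hatSet i m t
  | 0, _, _, h => h
  | m+1, s, t, h => hat_mono i m _ _ (Set.biUnion_subset_biUnion_left h)

lemma hat_cyl (i : Agt) (m : ℕ) (S : Set (ExpLoc Agt Loc (m+1))) (A : Set (ExpLoc Agt Loc m))
    (hne : S.Nonempty) (h : ∀ t ∈ S, t i = A) :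
    hatSet i (m+1) S = hatSet i m A := by
  have hU : (⋃ t ∈ S, t i) = A := by
    ext x
    simp only [Set.mem_iUnion₂, exists_prop]
    constructor
    · rintro ⟨t, ht, hx⟩; rwa [h t ht] at hx
    · intro hx; obtain ⟨t, ht⟩ := hne; exact ⟨t, ht, by rwa [h t ht]⟩
  show hatSet i m (⋃ t ∈ S, t i) = _
  rw [hU]

lemma hat_init (G : MAGIIAN Agt Loc Act) (i : Agt) :
    ∀ m, hatSet i m {(G.iterExpand m).init} = ({G.init} : Set Loc)
  | 0 => rfl
  | m+1 =>
      (hat_cyl i m {(G.iterExpand (m+1)).init} {(G.iterExpand m).init}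
        ⟨(G.iterExpand (m+1)).init, rfl⟩ (by rintro t rfl; rfl)).trans (hat_init G i m)

/-- the canonical lift of a play of `G` to knowledge states at every level -/
def liftP (G : MAGIIAN Agt Loc Act) (l : ℕ → Loc) (σ : ℕ → ∀ i, Act i) :
    (m : ℕ) → ℕ → ExpLoc Agt Loc m
  | 0 => l
  | m+1 => Nat.rec ((fun _ => {(G.iterExpand m).init}) : ExpLoc Agt Loc (m+1))
      (fun k ih i =>
        G.upd m i (ih i) (σ k i) ((G.iterExpand m).obs i (liftP G l σ m (k+1))))

example (G : MAGIIAN Agt Loc Act) (l : ℕ → Loc) (σ : ℕ → ∀ i, Act i) (k : ℕ) :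
    liftP G l σ 0 k = l k := rfl
example (G : MAGIIAN Agt Loc Act) (l : ℕ → Loc) (σ : ℕ → ∀ i, Act i) (m : ℕ) :
    liftP G l σ (m+1) 0 = fun _ => {(G.iterExpand m).init} := rfl
example (G : MAGIIAN Agt Loc Act) (l : ℕ → Loc) (σ : ℕ → ∀ i, Act i) (m k : ℕ) :
    liftP G l σ (m+1) (k+1) = fun i =>
      G.upd m i (liftP G l σ (m+1) k i) (σ k i)
        ((G.iterExpand m).obs i (liftP G l σ m (k+1))) := rfl
lemma lift_zero (G : MAGIIAN Agt Loc Act) (l : ℕ → Loc) (σ : ℕ → ∀ i, Act i)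
    (hl0 : l 0 = G.init) : ∀ m, liftP G l σ m 0 = (G.iterExpand m).init
  | 0 => hl0
  | m+1 => rfl

/-- the lift is a play at every level, and each level is a member of the
`i`-component of the next level -/
lemma lift_trans_mem (G : MAGIIAN Agt Loc Act) (l : ℕ → Loc) (σ : ℕ → ∀ i, Act i)
    (hl0 : l 0 = G.init) (hl : ∀ k, G.trans (l k) (σ k) (l (k+1))) :
    ∀ m, (∀ k, (G.iterExpand m).trans (liftP G l σ m k) (σ k) (liftP G l σ m (k+1))) ∧
      (∀ k i, liftP G l σ m k ∈ liftP G l σ (m+1) k i) := by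
  intro m
  induction m with
  | zero =>
    refine ⟨hl, ?_⟩
    intro k
    induction k with
    | zero => intro i; exact hl0
    | succ k ih =>
      intro i
      exact ⟨G.obs_mem i (l (k+1)), l k, ih i, σ k, rfl, hl k⟩
  | succ m ihm =>
    have htr : ∀ k, (G.iterExpand (m+1)).trans (liftP G l σ (m+1) k) (σ k)
        (liftP G l σ (m+1) (k+1)) := by
      intro k
      constructor
      · intro i
        refine ⟨(G.iterExpand m).obs i (liftP G l σ m (k+1)),
          ⟨liftP G l σ m (k+1), rfl⟩, rfl, ?_⟩
        exact ⟨liftP G l σ m (k+1), (G.iterExpand m).obs_mem i _,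
          liftP G l σ m k, ihm.2 k i, σ k, rfl, ihm.1 k⟩
      · refine ⟨liftP G l σ m k, Set.mem_iInter.2 (ihm.2 k),
          liftP G l σ m (k+1), Set.mem_iInter.2 (ihm.2 (k+1)), ihm.1 k⟩
    refine ⟨htr, ?_⟩
    intro k
    induction k with
    | zero =>
      intro i
      show liftP G l σ (m+1) 0 ∈ ({(G.iterExpand (m+1)).init} : Set (ExpLoc Agt Loc (m+1)))
      rw [lift_zero G l σ hl0 (m+1)]
      rfl
    | succ k ih =>
      intro i
      exact ⟨(G.iterExpand (m+1)).obs_mem i _, liftP G l σ (m+1) k, ih i, σ k, rfl, htr k⟩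

/-- the flattening of the lift's components is contained in the actual observation -/
lemma lift_hat (G : MAGIIAN Agt Loc Act) (l : ℕ → Loc) (σ : ℕ → ∀ i, Act i)
    (hl0 : l 0 = G.init) (hl : ∀ k, G.trans (l k) (σ k) (l (k+1))) :
    ∀ m k i, hatSet i m (liftP G l σ (m+1) k i) ⊆ G.obs i (l k) := by
  intro m
  induction m with
  | zero =>
    intro k i
    cases k with
    | zero =>
      rintro x hx
      rcases hx with rfl
      rw [hl0]
      exact G.obs_mem i G.init
    | succ k => exact fun x hx => hx.1
  | succ m ihm =>
    intro k i
    cases k with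
    | zero =>
      show hatSet i (m+1) (liftP G l σ (m+2) 0 i) ⊆ _
      have : liftP G l σ (m+2) 0 i = ({(G.iterExpand (m+1)).init} : Set (ExpLoc Agt Loc (m+1))) := rfl
      rw [this, hat_init G i (m+1), hl0]
      rintro x rfl
      exact G.obs_mem i G.init
    | succ k =>
      have hne : (liftP G l σ (m+2) (k+1) i).Nonempty :=
        ⟨liftP G l σ (m+1) (k+1), (lift_trans_mem G l σ hl0 hl (m+1)).2 (k+1) i⟩
      have hcyl : ∀ t ∈ liftP G l σ (m+2) (k+1) i, t i = liftP G l σ (m+1) (k+1) i :=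
        fun t ht => ht.1
      rw [hat_cyl i m _ _ hne hcyl]
      exact ihm (k+1) i
/-- uniqueness of the knowledge successor consistent with a given actual observation -/
lemma upd_pin (G : MAGIIAN Agt Loc Act) :
    ∀ m (i : Agt) (x : Loc) (A : Set (ExpLoc Agt Loc m)) (a : Act i)
      (o1 o2 : Set (ExpLoc Agt Loc m)),
      (∀ y ∈ A, ∀ z ∈ A, (G.iterExpand m).obs i y = (G.iterExpand m).obs i z) →
      (∀ y ∈ A, GoodL G m y) →
      (G.iterExpand m).IsObs i o1 → (G.iterExpand m).IsObs i o2 →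
      (G.upd m i A a o1).Nonempty → (G.upd m i A a o2).Nonempty →
      hatSet i m (G.upd m i A a o1) ⊆ G.obs i x →
      hatSet i m (G.upd m i A a o2) ⊆ G.obs i x →
      o1 = o2 := by
  intro m
  induction m with
  | zero =>
    rintro i x A a o1 o2 - - ⟨p1, rfl⟩ ⟨p2, rfl⟩ ⟨b1, hb1⟩ ⟨b2, hb2⟩ h1 h2
    have e1 : G.obs i p1 = G.obs i x := by
      rw [← G.obs_eq i p1 b1 hb1.1, G.obs_eq i x b1 (h1 hb1)]
    have e2 : G.obs i p2 = G.obs i x := by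
      rw [← G.obs_eq i p2 b2 hb2.1, G.obs_eq i x b2 (h2 hb2)]
    show G.obs i p1 = G.obs i p2
    rw [e1, e2]
  | succ j ihj =>
    rintro i x A a o1 o2 hsame hgood ⟨p1, rfl⟩ ⟨p2, rfl⟩ hne1 hne2 h1 h2
    obtain ⟨t1', ht1'⟩ := hne1
    obtain ⟨t2', ht2'⟩ := hne2
    obtain ⟨ht1'o, t1, ht1A, σ1, hσ1, htr1⟩ := ht1'
    obtain ⟨ht2'o, t2, ht2A, σ2, hσ2, htr2⟩ := ht2'
    -- components of elements of A are equal
    have ht12 : t1 i = t2 i := by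
      have : t1 ∈ (G.iterExpand (j+1)).obs i t2 := by
        rw [hsame t2 ht2A t1 ht1A]; exact (G.iterExpand (j+1)).obs_mem i t1
      exact this
    -- structure of successors' components
    obtain ⟨ob1, hob1, hEq1, hne1'⟩ := htr1.1 i
    obtain ⟨ob2, hob2, hEq2, hne2'⟩ := htr2.1 i
    rw [hσ1] at hEq1
    rw [hσ2] at hEq2
    have hEq1' : t1' i = G.upd j i (t1 i) a ob1 := hEq1
    have hEq2' : t2' i = G.upd j i (t1 i) a ob2 := by rw [ht12]; exact hEq2
    -- hats of components
    have hc1 : hatSet i (j+1) (G.upd (j+1) i A a ((G.iterExpand (j+1)).obs i p1))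
        = hatSet i j (t1' i) := by
      refine hat_cyl i j _ _ ⟨t1', ⟨ht1'o, t1, ht1A, σ1, hσ1, htr1⟩⟩ ?_
      intro t ht
      have h1 : t i = p1 i := ht.1
      have h2 : t1' i = p1 i := ht1'o
      rw [h1, h2]
    have hc2 : hatSet i (j+1) (G.upd (j+1) i A a ((G.iterExpand (j+1)).obs i p2))
        = hatSet i j (t2' i) := by
      refine hat_cyl i j _ _ ⟨t2', ⟨ht2'o, t2, ht2A, σ2, hσ2, htr2⟩⟩ ?_
      intro t ht
      have h1 : t i = p2 i := ht.1
      have h2 : t2' i = p2 i := ht2'o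
      rw [h1, h2]
    rw [hc1] at h1
    rw [hc2] at h2
    -- apply IH one level down
    obtain ⟨-, hsame1, hgood1⟩ := hgood t1 ht1A i
    have hob : ob1 = ob2 := by
      refine ihj i x (t1 i) a ob1 ob2 hsame1 hgood1 hob1 hob2 ?_ ?_ ?_ ?_
      · rw [← hEq1']; exact hne1'
      · rw [← hEq2']; exact hne2'
      · rw [← hEq1']; exact h1
      · rw [← hEq2']; exact h2
    have hp : p1 i = p2 i := by
      have e1 : t1' i = p1 i := ht1'o
      have e2 : t2' i = p2 i := ht2'o
      rw [← e1, ← e2, hEq1', hEq2', hob]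
    show {t : ExpLoc Agt Loc (j+1) | t i = p1 i} = {t | t i = p2 i}
    rw [hp]
/-- descending a translated objective membership back to `G` -/
lemma descend (G : MAGIIAN Agt Loc Act) (R : Set (Set Loc)) :
    ∀ m (o : Set (ExpLoc Agt Loc m)) (i : Agt) (x : Loc) (S : Set (ExpLoc Agt Loc m)),
      o ∈ iterObj G R m → (G.iterExpand m).IsObs i o → S.Nonempty → S ⊆ o →
      (∀ t ∈ S, GoodL G m t) → hatSet i m S ⊆ G.obs i x → G.obs i x ∈ R := by
  intro m
  induction m with
  | zero =>
    rintro o i x S hoR ⟨p, rfl⟩ ⟨b, hb⟩ hSo - hhat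
    have : G.obs i x = G.obs i p := by
      rw [← G.obs_eq i x b (hhat hb), G.obs_eq i p b (hSo hb)]
    rw [this]
    exact hoR
  | succ m ihm =>
    rintro o i x S hoR hobs ⟨t0, ht0⟩ hSo hgood hhat
    obtain ⟨i2, A, rfl, o2, ho2R, ho2obs, hAo2⟩ := hoR
    obtain ⟨w, hw⟩ := hobs
    -- the two cylinder descriptions must use the same agent
    have hii : i2 = i := by
      by_contra hne
      classical
      have hinst : Nonempty (ExpLoc Agt Loc m) := expLoc_nonempty G m
      set tstar : ExpLoc Agt Loc (m+1) := fun i' => if i' = i then w i else Aᶜ with htstar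
      have h1 : tstar ∈ (G.iterExpand (m+1)).obs i w := by
        show tstar i = w i
        simp [htstar]
      rw [← hw] at h1
      have h2 : tstar i2 = A := h1
      rw [htstar] at h2
      simp only [if_neg hne] at h2
      obtain ⟨y⟩ := hinst
      by_cases hy : y ∈ A
      · have : y ∈ Aᶜ := h2.symm ▸ hy
        exact this hy
      · exact hy (h2 ▸ hy)
    subst hii
    -- all elements of S have i2-component A
    have hcomp : ∀ t ∈ S, t i2 = A := fun t ht => hSo ht
    obtain ⟨hne0, -, hgood0⟩ := hgood t0 ht0 i2
    have hAne : A.Nonempty := by rw [← hcomp t0 ht0]; exact hne0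
    have hgoodA : ∀ y ∈ A, GoodL G m y := by
      intro y hy; exact hgood0 y (by rwa [hcomp t0 ht0])
    have hhatA : hatSet i2 m A ⊆ G.obs i2 x := by
      rw [← hat_cyl i2 m S A ⟨t0, ht0⟩ hcomp]
      exact hhat
    exact ihm o2 i2 x A ho2R ho2obs hAne hAo2 hgoodA hhatA

/-- Generalised Strategy Correspondence, part (ii), for `j = m + 1 ≥ 1`:
if `{α^{jK}_i}` is winning for the `j`-iterated translation `R^{jK}` in `G^{jK}`, then
the profile of generalised induced transducers `{A_i(α^{jK}_i)}` is winning for `R`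
in `G` (no PDK assumption is needed). -/
theorem generalised_strategy_correspondence_ii (G : MAGIIAN Agt Loc Act) (m : ℕ)
    (R : Set (Set Loc)) (hR : ∀ o ∈ R, ∃ i, G.IsObs i o)
    (α : ∀ i, Set (ExpLoc Agt Loc m) → Act i)
    (hwin : ∀ s : ℕ → ExpLoc Agt Loc (m + 1), gKMLOutcome G m α s →
      (iterExpand G (m + 1)).WinsReach (iterObj G R (m + 1)) s) :
    ∀ l, gTransducerOutcome G m α l → G.WinsReach R l := by
  rintro l ⟨hl0, σ, mem, hmem0, htr, hσ, hstep⟩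
  have hLtm := lift_trans_mem G l σ hl0 htr
  have hgoodLift : ∀ m' k, GoodL G m' (liftP G l σ m' k) := by
    intro m' k
    cases k with
    | zero => rw [lift_zero G l σ hl0 m']; exact goodL_init G m'
    | succ k => exact goodL_trans G m' _ _ _ ((hLtm m').1 k)
  -- the transducer memory coincides with the canonical lift of the play
  have hmemL : ∀ k i, mem i k = liftP G l σ (m+1) k i := by
    intro k
    induction k with
    | zero => intro i; rw [hmem0 i]; rfl
    | succ k ih =>
      intro i
      obtain ⟨o, ho, hEq, hne⟩ := (hstep k i).1
      have hhat := (hstep k i).2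
      have hup : mem i (k+1) = G.upd m i (liftP G l σ (m+1) k i) (σ k i) o := by
        rw [hEq, ih i]; rfl
      have hob'' : (G.iterExpand m).IsObs i ((G.iterExpand m).obs i (liftP G l σ m (k+1))) :=
        ⟨_, rfl⟩
      obtain ⟨hAne, hAsame, hAgood⟩ := (hgoodLift (m+1) k) i
      have hpin : o = (G.iterExpand m).obs i (liftP G l σ m (k+1)) := by
        refine upd_pin G m i (l (k+1)) (liftP G l σ (m+1) k i) (σ k i) o
          ((G.iterExpand m).obs i (liftP G l σ m (k+1)))
          hAsame hAgood ho hob'' ?_ ?_ ?_ ?_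
        · rw [← hup]; exact hne
        · exact ⟨liftP G l σ m (k+1), (hLtm m).2 (k+1) i⟩
        · rw [← hup]; exact hhat
        · exact lift_hat G l σ hl0 htr m (k+1) i
      rw [hup, hpin]
      rfl
  have hsL : ∀ k, (fun i => mem i k) = liftP G l σ (m+1) k :=
    fun k => funext fun i => hmemL k i
  have hout : gKMLOutcome G m α (fun k i => mem i k) := by
    refine ⟨σ, ?_, ?_, ?_⟩
    · show (fun i => mem i 0) = _
      rw [hsL 0]; exact lift_zero G l σ hl0 (m+1)
    · intro k
      show (G.iterExpand (m+1)).trans (fun i => mem i k) (σ k) (fun i => mem i (k+1))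
      rw [hsL k, hsL (k+1)]; exact (hLtm (m+1)).1 k
    · intro k i; exact hσ k i
  obtain ⟨i, k, hRk⟩ := hwin _ hout
  obtain ⟨i2, A, hOeq, o2, ho2R, ho2obs, hAo2⟩ := hRk
  have hsk : (fun i' => mem i' k) ∈ (G.iterExpand (m+1)).obs i (fun i' => mem i' k) :=
    (G.iterExpand (m+1)).obs_mem i _
  rw [hOeq] at hsk
  have hA : mem i2 k = A := hsk
  refine ⟨i2, k, ?_⟩
  refine descend G R m o2 i2 (l k) (mem i2 k) ho2R ho2obs ?_ ?_ ?_ ?_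
  · rw [hmemL k i2]; exact ⟨liftP G l σ m k, (hLtm m).2 k i2⟩
  · rw [hA]; exact hAo2
  · intro t ht
    rw [hmemL k i2] at ht
    exact ((hgoodLift (m+1) k) i2).2.2 t ht
  · rw [hmemL k i2]; exact lift_hat G l σ hl0 htr m k i2

end MAGIIAN
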